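/- Let n ≥ 1 and α ∈ ℝ. There exist constants c, C > 0, depending only on n and α, such that for every finite positive Borel measure μ on S_n, with Cauchy transform C_[μ](z) = ∫_{S_n} (1 − Σ_{i=1}^n z_i ζ_i)^{−n} dμ(ζ) and moments μ*(j) = ∫_{S_n} ζ^j dμ(ζ), one has (as inequalities in [0,∞]): c·Σ_{k=0}^∞ Σ_{|j|=k} (k+1)^{n−1−α}·(k!/j!)·|μ*(j)|² ≤ ‖C_[μ]‖²_{−α} ≤ C·Σ_{k=0}^∞ Σ_{|j|=k} (k+1)^{n−1−α}·(k!/j!)·|μ*(j)|², where the inner sums run over multi-indices j ∈ ℕⁿ with |j| = k. -/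

import Mathlib

open MeasureTheory
open scoped ENNReal Classical

noncomputable section

/-- The ambient space `ℂⁿ` with the Euclidean norm; the unit ball `𝔹ₙ` is
`Metric.ball (0 : En n) 1` and the unit sphere `𝕊ₙ` is `Metric.sphere (0 : En n) 1`. -/
abbrev En (n : ℕ) := EuclideanSpace ℂ (Fin n)

/-- Lebesgue measure on `ℂⁿ`, transported along the definitional equality
`EuclideanSpace ℂ (Fin n) = (Fin n → ℂ)`. -/
noncomputable instance (n : ℕ) : MeasureSpace (En n) where
  toMeasurableSpace := MeasurableSpace.comap (WithLp.ofLp (p := 2)) inferInstance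
  volume := @Measure.map (Fin n → ℂ) (En n) _
    (MeasurableSpace.comap (WithLp.ofLp (p := 2)) inferInstance) (WithLp.toLp 2) volume

/-- `|k| = k₁ + … + kₙ` for a multi-index `k`. -/
def mOrd {n : ℕ} (k : Fin n → ℕ) : ℕ := ∑ i, k i

/-- `k! = k₁! ⋯ kₙ!` for a multi-index `k`. -/
def mFact {n : ℕ} (k : Fin n → ℕ) : ℕ := ∏ i, (k i).factorial

/-- `z^k = z₁^{k₁} ⋯ zₙ^{kₙ}` for a multi-index `k`. -/
def mPow {n : ℕ} (z : En n) (k : Fin n → ℕ) : ℂ := ∏ i, z i ^ k i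

/-- The weight `(n+|k|)^α · (n-1)!·k! / (n-1+|k|)!` appearing in the Dirichlet-type norm. -/
def dWeight (n : ℕ) (α : ℝ) (k : Fin n → ℕ) : ℝ :=
  ((n : ℝ) + mOrd k) ^ α * (((n - 1).factorial * mFact k : ℕ) : ℝ) /
    (((n - 1 + mOrd k).factorial : ℕ) : ℝ)

/-- The squared Dirichlet-type norm `‖·‖²_α` of a family of Taylor coefficients,
valued in `[0,∞]`. -/
def Dnorm2 (n : ℕ) (α : ℝ) (a : (Fin n → ℕ) → ℂ) : ℝ≥0∞ :=
  ∑' k : Fin n → ℕ, ENNReal.ofReal (dWeight n α k * ‖a k‖ ^ 2)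

/-- `a` is the family of power-series (Taylor) coefficients of `f` on the unit ball:
`f z = Σ_k a_k z^k` for every `z` in the ball. -/
def HasCoeffs (n : ℕ) (f : En n → ℂ) (a : (Fin n → ℕ) → ℂ) : Prop :=
  ∀ z ∈ Metric.ball (0 : En n) 1, HasSum (fun k => a k * mPow z k) (f z)

/-- The squared Dirichlet-type norm `‖f‖²_α` of a function, computed through its
power-series coefficients (which are unique when they exist). -/
def DnormF2 (n : ℕ) (α : ℝ) (f : En n → ℂ) : ℝ≥0∞ :=
  sInf {x | ∃ a, HasCoeffs n f a ∧ x = Dnorm2 n α a}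

/-- Membership in the Dirichlet-type space `D_α(𝔹ₙ)`. -/
def MemD (n : ℕ) (α : ℝ) (f : En n → ℂ) : Prop :=
  DifferentiableOn ℂ f (Metric.ball 0 1) ∧ ∃ a, HasCoeffs n f a ∧ Dnorm2 n α a < ⊤

/-- `f` is a cyclic vector of `D_α(𝔹ₙ)`: for every `ε > 0` there is a polynomial `q`
with `‖q·f - 1‖²_α < ε`. -/
def CyclicD (n : ℕ) (α : ℝ) (f : En n → ℂ) : Prop :=
  ∀ ε : ℝ, 0 < ε → ∃ q : MvPolynomial (Fin n) ℂ,
    DnormF2 n α (fun z => MvPolynomial.eval (fun i => z i) q * f z - 1) < ENNReal.ofReal ε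

/-- The Cauchy transform `C_[μ](z) = ∫_{𝕊ₙ} (1 - Σᵢ zᵢζᵢ)^{-n} dμ(ζ)`. -/
def cauchyT (n : ℕ) (μ : Measure (En n)) (z : En n) : ℂ :=
  ∫ ζ, (1 - ∑ i, z i * ζ i) ^ (-(n : ℂ)) ∂μ

/-- The moment sum `Σ_{j∈ℕⁿ} (|j|+1)^{n-1-α}·(|j|!/j!)·|μ*(j)|²`, where
`μ*(j) = ∫ ζ^j dμ(ζ)`. -/
def momSum (n : ℕ) (α : ℝ) (μ : Measure (En n)) : ℝ≥0∞ :=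
  ∑' j : Fin n → ℕ, ENNReal.ofReal (((mOrd j : ℝ) + 1) ^ ((n : ℝ) - 1 - α) *
    (((mOrd j).factorial : ℝ) / (mFact j : ℝ)) * ‖∫ ζ, mPow ζ j ∂μ‖ ^ 2)


/-!
For `‖z‖ < 1` and `‖ζ‖ ≤ 1`, Cauchy–Schwarz gives `∑ |zᵢ ζᵢ| ≤ ‖z‖ < 1`, so the multinomial
expansion `(1 - ∑ zᵢ ζᵢ)⁻ⁿ = ∑_j B_j z^j ζ^j` with `B_j = (n-1+|j|)! / ((n-1)! j!)` converges
absolutely, uniformly in `ζ`; integrating it term by term against `μ` shows that `C_[μ]` has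
Taylor coefficients `B_j μ*(j)`. Taylor coefficients are unique (they are Fourier coefficients
on a small torus), hence `‖C_[μ]‖²_{-α} = ∑_j (n+|j|)^{-α} B_j |μ*(j)|²`. Finally
`B_j = C(|j|+n-1, n-1) · |j|!/j!` with `(k+1)^{n-1}/(n-1)! ≤ C(k+n-1, n-1) ≤ (k+1)^{n-1}` and
`n^{-|α|} (k+1)^{-α} ≤ (n+k)^{-α} ≤ n^{|α|} (k+1)^{-α}`, which compares the two series term by
term.
-/

open Finset Finset.Nat

/-- The coefficient of `x^j` in `(1 - ∑ xᵢ)⁻ⁿ`. -/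
def kernelCoeff (n : ℕ) (j : Fin n → ℕ) : ℕ :=
  (mOrd j + (n - 1)).choose (n - 1) * Nat.multinomial univ j

lemma mFact_mul_multinomial {n : ℕ} (j : Fin n → ℕ) :
    mFact j * Nat.multinomial univ j = (mOrd j).factorial :=
  Nat.multinomial_spec univ j

lemma mFact_pos {n : ℕ} (j : Fin n → ℕ) : 0 < mFact j :=
  prod_pos fun i _ => Nat.factorial_pos (j i)

lemma kernelCoeff_mul_factorial (n : ℕ) (j : Fin n → ℕ) :
    kernelCoeff n j * ((n - 1).factorial * mFact j) = (n - 1 + mOrd j).factorial := by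
  rw [add_comm, ← Nat.add_choose_mul_factorial_mul_factorial, kernelCoeff,
    ← mFact_mul_multinomial]
  ring

lemma kernelCoeff_eq (n : ℕ) (j : Fin n → ℕ) :
    (kernelCoeff n j : ℝ) =
      (mOrd j + (n - 1)).choose (n - 1) * ((mOrd j).factorial / mFact j : ℝ) := by
  have : (0 : ℝ) < mFact j := Nat.cast_pos.2 (mFact_pos j)
  rw [kernelCoeff, ← mFact_mul_multinomial]
  push_cast
  field_simp

lemma sum_antidiagonalTuple_kernelCoeff {R : Type*} [CommSemiring R] (n : ℕ) (x : Fin n → R)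
    (k : ℕ) :
    ∑ j ∈ antidiagonalTuple n k, (kernelCoeff n j : R) * ∏ i, x i ^ j i =
      (k + (n - 1)).choose (n - 1) * (∑ i, x i) ^ k := by
  have : antidiagonalTuple n k = univ.piAntidiag k := by
    ext j; simp [mem_piAntidiag, mem_antidiagonalTuple]
  rw [this, sum_pow_eq_sum_piAntidiag, mul_sum]
  refine sum_congr rfl fun j hj => ?_
  have hk : mOrd j = k := (mem_piAntidiag.1 hj).1
  rw [kernelCoeff, hk]
  push_cast
  ring

section Fiberwise

variable {n : ℕ}

lemma summable_of_summable_sum_antidiagonalTuple {f : (Fin n → ℕ) → ℝ} (hf : 0 ≤ f)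
    (h : Summable fun k => ∑ j ∈ antidiagonalTuple n k, f j) : Summable f := by
  rw [← (sigmaAntidiagonalTupleEquivTuple n).summable_iff]
  exact (summable_sigma_of_nonneg fun _ => hf _).2
    ⟨fun _ => .of_finite, h.congr fun k => (Finset.tsum_subtype _ f).symm⟩

lemma hasSum_of_hasSum_sum_antidiagonalTuple {E : Type*} [NormedAddCommGroup E]
    {f : (Fin n → ℕ) → E} {a : E} (hf : Summable f)
    (h : HasSum (fun k => ∑ j ∈ antidiagonalTuple n k, f j) a) : HasSum f a := by
  have hσ := ((sigmaAntidiagonalTupleEquivTuple n).hasSum_iff.2 hf.hasSum).sigma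
    fun k => Finset.hasSum (antidiagonalTuple n k) f
  exact h.unique hσ ▸ hf.hasSum

end Fiberwise

section Expansion

variable {𝕜 : Type*} [RCLike 𝕜] {n : ℕ}

lemma hasSum_sum_antidiagonalTuple_kernelCoeff (hn : 1 ≤ n) {x : Fin n → 𝕜}
    (hx : ‖∑ i, x i‖ < 1) :
    HasSum (fun k => ∑ j ∈ antidiagonalTuple n k, (kernelCoeff n j : 𝕜) * ∏ i, x i ^ j i)
      ((1 - ∑ i, x i) ^ n)⁻¹ := by
  simp_rw [sum_antidiagonalTuple_kernelCoeff]
  simpa [Nat.sub_add_cancel hn] using hasSum_choose_mul_geometric_of_norm_lt_one' (n - 1) hx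

lemma norm_kernelCoeff_mul_prod_pow (x : Fin n → 𝕜) (j : Fin n → ℕ) :
    ‖(kernelCoeff n j : 𝕜) * ∏ i, x i ^ j i‖ = kernelCoeff n j * ∏ i, ‖x i‖ ^ j i := by
  simp [norm_prod]

lemma hasSum_kernelCoeff_mul_prod_pow (hn : 1 ≤ n) {x : Fin n → 𝕜} (hx : ∑ i, ‖x i‖ < 1) :
    HasSum (fun j => (kernelCoeff n j : 𝕜) * ∏ i, x i ^ j i) ((1 - ∑ i, x i) ^ n)⁻¹ := by
  have habs : Summable fun j => ‖(kernelCoeff n j : 𝕜) * ∏ i, x i ^ j i‖ := by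
    simp_rw [norm_kernelCoeff_mul_prod_pow]
    refine summable_of_summable_sum_antidiagonalTuple (fun _ => by positivity) ?_
    refine (hasSum_sum_antidiagonalTuple_kernelCoeff hn (x := fun i => ‖x i‖) ?_).summable
    rwa [Real.norm_of_nonneg (sum_nonneg fun i _ => norm_nonneg _)]
  exact hasSum_of_hasSum_sum_antidiagonalTuple habs.of_norm <|
    hasSum_sum_antidiagonalTuple_kernelCoeff hn <| (norm_sum_le _ _).trans_lt hx

end Expansion

section CauchyTransform

variable {n : ℕ}

lemma sum_norm_mul_le_norm_mul_norm (z ζ : En n) : ∑ i, ‖z i * ζ i‖ ≤ ‖z‖ * ‖ζ‖ := by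
  simp only [norm_mul]
  calc ∑ i, ‖z i‖ * ‖ζ i‖ ≤ √(∑ i, ‖z i‖ ^ 2) * √(∑ i, ‖ζ i‖ ^ 2) :=
        Real.sum_mul_le_sqrt_mul_sqrt _ _ _
    _ = ‖z‖ * ‖ζ‖ := by rw [EuclideanSpace.norm_eq, EuclideanSpace.norm_eq]

lemma mPow_mul_mPow (z ζ : En n) (j : Fin n → ℕ) :
    mPow z j * mPow ζ j = ∏ i, (z i * ζ i) ^ j i := by
  simp only [mPow, mul_pow, prod_mul_distrib]

lemma continuous_mPow (j : Fin n → ℕ) : Continuous fun z : En n => mPow z j := by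
  unfold mPow
  fun_prop

lemma hasSum_cauchyKernel (hn : 1 ≤ n) {z ζ : En n} (hz : ‖z‖ < 1) (hζ : ‖ζ‖ ≤ 1) :
    HasSum (fun j => (kernelCoeff n j : ℂ) * mPow z j * mPow ζ j)
      ((1 - ∑ i, z i * ζ i) ^ (-(n : ℂ))) := by
  have h : ∑ i, ‖z i * ζ i‖ < 1 :=
    (sum_norm_mul_le_norm_mul_norm z ζ).trans_lt <| by nlinarith [norm_nonneg z, norm_nonneg ζ]
  simpa only [mul_assoc, mPow_mul_mPow, Complex.cpow_neg, Complex.cpow_natCast] using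
    hasSum_kernelCoeff_mul_prod_pow hn h

lemma sum_norm_cauchyKernel_le (hn : 1 ≤ n) {z ζ : En n} (hz : ‖z‖ < 1) (hζ : ‖ζ‖ ≤ 1)
    (S : Finset (Fin n → ℕ)) :
    ∑ j ∈ S, ‖(kernelCoeff n j : ℂ) * mPow z j * mPow ζ j‖ ≤ ((1 - ‖z‖) ^ n)⁻¹ := by
  have hzζ : ∑ i, ‖z i * ζ i‖ ≤ ‖z‖ :=
    (sum_norm_mul_le_norm_mul_norm z ζ).trans (mul_le_of_le_one_right (norm_nonneg z) hζ)
  have hreal := hasSum_kernelCoeff_mul_prod_pow (𝕜 := ℝ) hn (x := fun i => ‖z i * ζ i‖)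
    (by simpa using hzζ.trans_lt hz)
  calc ∑ j ∈ S, ‖(kernelCoeff n j : ℂ) * mPow z j * mPow ζ j‖
      = ∑ j ∈ S, (kernelCoeff n j : ℝ) * ∏ i, ‖z i * ζ i‖ ^ j i := by
        simp_rw [mul_assoc, mPow_mul_mPow, norm_kernelCoeff_mul_prod_pow]
    _ ≤ ((1 - ∑ i, ‖z i * ζ i‖) ^ n)⁻¹ := sum_le_hasSum S (fun _ _ => by positivity) hreal
    _ ≤ ((1 - ‖z‖) ^ n)⁻¹ := by
        have : 0 < 1 - ‖z‖ := by linarith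
        gcongr

lemma hasCoeffs_cauchyT (hn : 1 ≤ n) (μ : Measure (En n)) [IsFiniteMeasure μ]
    (hμ : ∀ᵐ ζ ∂μ, ‖ζ‖ ≤ 1) :
    HasCoeffs n (cauchyT n μ) fun j => kernelCoeff n j * ∫ ζ, mPow ζ j ∂μ := by
  intro z hz
  rw [mem_ball_zero_iff] at hz
  set F : (Fin n → ℕ) → En n → ℂ := fun j ζ => kernelCoeff n j * mPow z j * mPow ζ j
  have hF_int : ∀ j, Integrable (F j) μ := fun j => by
    refine .of_bound (continuous_const.mul (continuous_mPow j)).aestronglyMeasurable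
      ((1 - ‖z‖) ^ n)⁻¹ (hμ.mono fun ζ hζ => ?_)
    simpa only [sum_singleton] using sum_norm_cauchyKernel_le hn hz hζ {j}
  have hF_sum : Summable fun j => ∫ ζ, ‖F j ζ‖ ∂μ := by
    refine summable_of_sum_le (c := μ.real Set.univ • ((1 - ‖z‖) ^ n)⁻¹)
      (fun j => integral_nonneg fun _ => norm_nonneg _) fun S => ?_
    rw [← integral_finsetSum S fun j _ => (hF_int j).norm, ← integral_const]
    exact integral_mono_ae (integrable_finsetSum S fun j _ => (hF_int j).norm)
      (integrable_const _) (hμ.mono fun ζ hζ => sum_norm_cauchyKernel_le hn hz hζ S)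
  have h := hasSum_integral_of_summable_integral_norm hF_int hF_sum
  rw [integral_congr_ae (hμ.mono fun ζ hζ => (hasSum_cauchyKernel hn hz hζ).tsum_eq)] at h
  have hcoeff : ∀ j, ∫ ζ, F j ζ ∂μ = kernelCoeff n j * (∫ ζ, mPow ζ j ∂μ) * mPow z j := by
    intro j
    simp only [F, integral_const_mul]
    ring
  simp only [hcoeff] at h
  exact h

end CauchyTransform

section Uniqueness

open AddCircle

variable {n : ℕ}

lemma fourier_one_pow (x : UnitAddCircle) (m : ℕ) : fourier 1 x ^ m = fourier m x := by
  rw [fourier_apply, fourier_apply, one_zsmul, natCast_zsmul, toCircle_nsmul, Circle.coe_pow]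

lemma integral_torus_monomial (ρ : ℂ) (j k : Fin n → ℕ) :
    ∫ θ, ∏ i, fourier (-(j i : ℤ)) (θ i) * (ρ * fourier 1 (θ i)) ^ k i
        ∂(Measure.pi fun _ => haarAddCircle (T := 1)) = if k = j then ρ ^ mOrd j else 0 := by
  have h1 : ∀ i,
      ∫ t : UnitAddCircle, fourier (-(j i : ℤ)) t * (ρ * fourier 1 t) ^ k i ∂haarAddCircle =
        ρ ^ k i * Pi.single (M := fun _ : ℤ => ℂ) (k i : ℤ) 1 (j i : ℤ) := by
    intro i
    simp_rw [mul_pow, fourier_one_pow, mul_left_comm _ (ρ ^ k i)]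
    rw [integral_const_mul, ← fourierCoeff_fourier (T := 1)]
    rfl
  rw [integral_fintype_prod_eq_prod
    (f := fun i t => fourier (-(j i : ℤ)) t * (ρ * fourier 1 t) ^ k i)]
  simp_rw [h1]
  split_ifs with h
  · subst h
    simp [mOrd, prod_pow_eq_pow_sum]
  · obtain ⟨i, hi⟩ := Function.ne_iff.1 h
    exact prod_eq_zero (mem_univ i) (by simp [Ne.symm hi])

/-- Integrate the series against `∏ e(-jᵢ θᵢ)` over the torus `wᵢ = ρ e(θᵢ)`: only the `j`-th
term survives. -/
lemma eq_zero_of_hasSum_monomial_eq_zero {c : (Fin n → ℕ) → ℂ} {ρ : ℝ} (hρ : 0 < ρ)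
    (hc : ∀ w : Fin n → ℂ, (∀ i, ‖w i‖ = ρ) → HasSum (fun k => c k * ∏ i, w i ^ k i) 0) :
    c = 0 := by
  funext j
  set w : (Fin n → UnitAddCircle) → Fin n → ℂ := fun θ i => ρ * fourier 1 (θ i)
  have hw : ∀ θ i, ‖w θ i‖ = ρ := fun θ i => by
    simp [w, fourier_apply, Circle.norm_coe, abs_of_pos hρ]
  set G : (Fin n → ℕ) → (Fin n → UnitAddCircle) → ℂ := fun k θ =>
    c k * ∏ i, fourier (-(j i : ℤ)) (θ i) * w θ i ^ k i
  have hG_norm : ∀ k θ, ‖G k θ‖ = ‖c k‖ * ρ ^ mOrd k := fun k θ => by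
    simp [G, norm_prod, hw, fourier_apply, Circle.norm_coe, mOrd, prod_pow_eq_pow_sum]
  have hG_int : ∀ k, Integrable (G k) (Measure.pi fun _ => haarAddCircle) := fun k =>
    .of_bound (by fun_prop) _ (ae_of_all _ fun θ => (hG_norm k θ).le)
  have hG_sum : Summable fun k => ∫ θ, ‖G k θ‖ ∂(Measure.pi fun _ => haarAddCircle) := by
    simp_rw [hG_norm, integral_const, probReal_univ, one_smul]
    have := summable_norm_iff.2 (hc (fun _ => ρ) fun _ => by simp [abs_of_pos hρ]).summable
    simpa [norm_prod, abs_of_pos hρ, mOrd, prod_pow_eq_pow_sum] using this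
  have hG_tsum : ∀ θ, ∑' k, G k θ = 0 := fun θ => by
    have := ((hc (w θ) (hw θ)).mul_left (∏ i, fourier (-(j i : ℤ)) (θ i))).tsum_eq
    simpa [G, prod_mul_distrib, mul_left_comm] using this
  have h := hasSum_integral_of_summable_integral_norm hG_int hG_sum
  simp only [hG_tsum, integral_zero, G, w, integral_const_mul, integral_torus_monomial] at h
  have := h.unique (hasSum_single j fun k hk => by simp [hk])
  simpa [hρ.ne'] using this.symm

lemma HasCoeffs.unique {f : En n → ℂ} {a b : (Fin n → ℕ) → ℂ} (ha : HasCoeffs n f a)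
    (hb : HasCoeffs n f b) : a = b := by
  have hρ : (0 : ℝ) < 1 / (n + 1) := by positivity
  refine sub_eq_zero.1 (eq_zero_of_hasSum_monomial_eq_zero hρ fun w hw => ?_)
  have hball : WithLp.toLp 2 w ∈ Metric.ball (0 : En n) 1 := by
    rw [mem_ball_zero_iff, ← sq_lt_one_iff₀ (norm_nonneg _), EuclideanSpace.norm_sq_eq]
    simp only [hw, sum_const, card_univ, Fintype.card_fin, nsmul_eq_mul]
    rw [div_pow, one_pow, mul_one_div, div_lt_one (by positivity)]
    nlinarith
  simpa [sub_mul, mPow] using (ha _ hball).sub (hb _ hball)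

lemma HasCoeffs.dnormF2_eq {f : En n → ℂ} {a : (Fin n → ℕ) → ℂ} (ha : HasCoeffs n f a)
    (α : ℝ) : DnormF2 n α f = Dnorm2 n α a := by
  refine le_antisymm (sInf_le ⟨a, ha, rfl⟩) (le_sInf ?_)
  rintro _ ⟨b, hb, rfl⟩
  rw [ha.unique hb]

end Uniqueness

section Weights

lemma rpow_le_mul_rpow_of_le_mul {x y c : ℝ} (hx : 0 < x) (hy : 0 < y) (hxy : x ≤ c * y)
    (hyx : y ≤ c * x) (β : ℝ) : y ^ β ≤ c ^ |β| * x ^ β := by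
  have hc : 0 < c := pos_of_mul_pos_left (hy.trans_le hyx) hx.le
  rcases le_or_gt 0 β with hβ | hβ
  · rw [abs_of_nonneg hβ, ← Real.mul_rpow hc.le hx.le]
    exact Real.rpow_le_rpow hy.le hyx hβ
  · have h := Real.rpow_le_rpow_of_nonpos hx hxy hβ.le
    rw [Real.mul_rpow hc.le hy.le] at h
    rw [abs_of_neg hβ, Real.rpow_neg hc.le]
    rwa [le_inv_mul_iff₀ (Real.rpow_pos_of_pos hc _)]

variable {n : ℕ}

lemma dWeight_mul_kernelCoeff_sq (β : ℝ) (j : Fin n → ℕ) :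
    dWeight n β j * (kernelCoeff n j : ℝ) ^ 2 = ((n : ℝ) + mOrd j) ^ β * kernelCoeff n j := by
  have h : (kernelCoeff n j : ℝ) * ((n - 1).factorial * mFact j) = (n - 1 + mOrd j).factorial := by
    exact_mod_cast kernelCoeff_mul_factorial n j
  have : (0 : ℝ) < mFact j := Nat.cast_pos.2 (mFact_pos j)
  rw [dWeight, ← h]
  push_cast
  field_simp

lemma dWeight_mul_kernelCoeff_sq_bounds (hn : 1 ≤ n) (α : ℝ) (j : Fin n → ℕ) :
    (n : ℝ) ^ (-|α|) / (n - 1).factorial *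
        (((mOrd j : ℝ) + 1) ^ ((n : ℝ) - 1 - α) * ((mOrd j).factorial / mFact j)) ≤
      dWeight n (-α) j * (kernelCoeff n j : ℝ) ^ 2 ∧
    dWeight n (-α) j * (kernelCoeff n j : ℝ) ^ 2 ≤
      (n : ℝ) ^ |α| *
        (((mOrd j : ℝ) + 1) ^ ((n : ℝ) - 1 - α) * ((mOrd j).factorial / mFact j)) := by
  set k := mOrd j with hk_def
  have hn' : (1 : ℝ) ≤ n := by exact_mod_cast hn
  have hk : (0 : ℝ) < k + 1 := by positivity
  have hnk : (0 : ℝ) < n + k := by positivity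
  have hN : (0 : ℝ) < (n : ℝ) ^ |α| := by positivity
  have hkn : (k : ℝ) + 1 ≤ n * (n + k) := by nlinarith
  have hnk' : (n : ℝ) + k ≤ n * (k + 1) := by nlinarith
  have hA := abs_neg α ▸ rpow_le_mul_rpow_of_le_mul hk hnk hkn hnk' (-α)
  have ha := abs_neg α ▸ rpow_le_mul_rpow_of_le_mul hnk hk hnk' hkn (-α)
  have hC : ((k : ℝ) + 1) ^ (n - 1) ≤ (n - 1).factorial * (k + (n - 1)).choose (n - 1) := by
    exact_mod_cast Nat.ascFactorial_eq_factorial_mul_choose k (n - 1) ▸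
      Nat.pow_succ_le_ascFactorial (k + 1) (n - 1)
  have hC' : ((k + (n - 1)).choose (n - 1) : ℝ) ≤ ((k : ℝ) + 1) ^ (n - 1) := by
    exact_mod_cast Nat.choose_add_le_add_one_pow k (n - 1)
  have hsplit : ((k : ℝ) + 1) ^ ((n : ℝ) - 1 - α) = ((k : ℝ) + 1) ^ (n - 1) * (k + 1) ^ (-α) := by
    rw [← Real.rpow_natCast, ← Real.rpow_add hk]
    push_cast [Nat.cast_sub hn]
    ring_nf
  have hF : (0 : ℝ) < (n - 1).factorial := by positivity
  rw [dWeight_mul_kernelCoeff_sq, kernelCoeff_eq, ← hk_def, hsplit,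
    Real.rpow_neg (by positivity) |α|]
  constructor
  · calc (n ^ |α| : ℝ)⁻¹ / (n - 1).factorial * ((k + 1) ^ (n - 1) * (k + 1) ^ (-α) *
          (k.factorial / mFact j))
        = (k + 1) ^ (n - 1) / (n - 1).factorial * ((k + 1) ^ (-α) / n ^ |α|) *
          (k.factorial / mFact j) := by ring
      _ ≤ (k + (n - 1)).choose (n - 1) * (n + k) ^ (-α) * (k.factorial / mFact j) := by
        gcongr
        · rwa [div_le_iff₀ hF, mul_comm]
        · rwa [div_le_iff₀' hN]
      _ = _ := by ring
  · calc ((n : ℝ) + k) ^ (-α) * ((k + (n - 1)).choose (n - 1) * (k.factorial / mFact j))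
        ≤ (n ^ |α| * (k + 1) ^ (-α)) * ((k + 1) ^ (n - 1) * (k.factorial / mFact j)) := by
          gcongr
      _ = _ := by ring

end Weights

lemma ENNReal.ofReal_mul_tsum_ofReal {ι : Type*} {c : ℝ} (hc : 0 ≤ c) (f : ι → ℝ) :
    ENNReal.ofReal c * ∑' i, ENNReal.ofReal (f i) = ∑' i, ENNReal.ofReal (c * f i) := by
  simp_rw [← ENNReal.tsum_mul_left, ENNReal.ofReal_mul hc]

/-- for every finite positive Borel measure `μ` on the unit sphere,
`‖C_[μ]‖²_{-α} ≍ Σ_k Σ_{|j|=k} (k+1)^{n-1-α}(k!/j!)|μ*(j)|²`, with constants depending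
only on `n` and `α`. -/
theorem stmt_13 (n : ℕ) (hn : 1 ≤ n) (α : ℝ) :
    ∃ c C : ℝ, 0 < c ∧ 0 < C ∧
      ∀ μ : Measure (En n), IsFiniteMeasure μ → μ (Metric.sphere (0 : En n) 1)ᶜ = 0 →
        ENNReal.ofReal c * momSum n α μ ≤ DnormF2 n (-α) (cauchyT n μ) ∧
          DnormF2 n (-α) (cauchyT n μ) ≤ ENNReal.ofReal C * momSum n α μ := by
  refine ⟨n ^ (-|α|) / (n - 1).factorial, n ^ |α|, by positivity, by positivity,
    fun μ _ hμ => ?_⟩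
  have hμ_sphere : ∀ᵐ ζ ∂μ, ζ ∈ Metric.sphere (0 : En n) 1 := hμ
  have hcoeff := hasCoeffs_cauchyT hn μ <|
    hμ_sphere.mono fun ζ hζ => (mem_sphere_zero_iff_norm.1 hζ).le
  have hterm : ∀ j, dWeight n (-α) j * ‖(kernelCoeff n j : ℂ) * ∫ ζ, mPow ζ j ∂μ‖ ^ 2 =
      dWeight n (-α) j * (kernelCoeff n j : ℝ) ^ 2 * ‖∫ ζ, mPow ζ j ∂μ‖ ^ 2 := fun j => by
    rw [norm_mul, Complex.norm_natCast]
    ring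
  rw [hcoeff.dnormF2_eq, Dnorm2, momSum, ENNReal.ofReal_mul_tsum_ofReal (by positivity),
    ENNReal.ofReal_mul_tsum_ofReal (by positivity)]
  simp only [hterm]
  have hb := dWeight_mul_kernelCoeff_sq_bounds hn α
  constructor <;> refine ENNReal.tsum_le_tsum fun j => ENNReal.ofReal_le_ofReal ?_ <;>
    rw [← mul_assoc]
  · exact mul_le_mul_of_nonneg_right (hb j).1 (by positivity)
  · exact mul_le_mul_of_nonneg_right (hb j).2 (by positivity)
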